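/- Let k be an odd natural number and q ∈ ℂ[X]. If S^k ∘ q(D) commutes with the even Szegő projector Π_even, then q = 0; likewise, if S'^k ∘ q(D) commutes with Π_even, then q = 0. (Odd Fourier components of an operator commuting with Π_even vanish.) -/
import Mathlib

open Polynomial

local notation "V" => (ℤ →₀ ℂ)

/-- The operator `(1/i) d/dθ`: `D δ_m = m • δ_m`. -/
noncomputable def D : Module.End ℂ V :=
  Finsupp.lsum ℂ fun m => (m : ℂ) • Finsupp.lsingle m

/-- Multiplication by `e^{iθ}`, the up-shift: `S δ_m = δ_{m+1}`. -/
noncomputable def S : Module.End ℂ V :=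
  Finsupp.lsum ℂ fun m => Finsupp.lsingle (m + 1)

/-- Multiplication by `e^{-iθ}`, the down-shift: `S' δ_m = δ_{m-1}`. -/
noncomputable def S' : Module.End ℂ V :=
  Finsupp.lsum ℂ fun m => Finsupp.lsingle (m - 1)

/-- The even Szegő projector: `Π_even δ_m = δ_m` for `m ≥ 0` even, `Π_even δ_m = 0` otherwise. -/
noncomputable def SzegoEven : Module.End ℂ V :=
  Finsupp.lsum ℂ fun m => if 0 ≤ m ∧ Even m then Finsupp.lsingle m else 0

lemma D_single (m : ℤ) : D (Finsupp.single m 1) = (m : ℂ) • Finsupp.single m 1 := by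
  rw [D, Finsupp.lsum_single, LinearMap.smul_apply, Finsupp.lsingle_apply]

lemma S_single (m : ℤ) : S (Finsupp.single m 1) = Finsupp.single (m + 1) 1 := by
  rw [S, Finsupp.lsum_single]; simp

lemma S'_single (m : ℤ) : S' (Finsupp.single m 1) = Finsupp.single (m - 1) 1 := by
  rw [S', Finsupp.lsum_single]; simp

lemma Szego_single (m : ℤ) :
    SzegoEven (Finsupp.single m 1) =
      if 0 ≤ m ∧ Even m then Finsupp.single m 1 else 0 := by
  rw [SzegoEven, Finsupp.lsum_single]
  split <;> simp

lemma single_ne (m : ℤ) : (Finsupp.single m 1 : V) ≠ 0 := by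
  intro h
  simpa using DFunLike.congr_fun h m

lemma aeval_D_single (q : ℂ[X]) (m : ℤ) :
    Polynomial.aeval D q (Finsupp.single m 1) = q.eval (m : ℂ) • Finsupp.single m 1 := by
  have hev : D.HasEigenvector (m : ℂ) (Finsupp.single m 1) := by
    refine ⟨?_, single_ne m⟩
    rw [Module.End.mem_eigenspace_iff]
    exact D_single m
  exact Module.End.aeval_apply_of_hasEigenvector hev

lemma S_pow_single (k : ℕ) (m : ℤ) :
    (S ^ k) (Finsupp.single m 1) = Finsupp.single (m + k) 1 := by
  induction k generalizing m with
  | zero => simp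
  | succ n ih =>
    rw [pow_succ, Module.End.mul_apply, S_single, ih]
    congr 1
    push_cast
    ring

lemma S'_pow_single (k : ℕ) (m : ℤ) :
    (S' ^ k) (Finsupp.single m 1) = Finsupp.single (m - k) 1 := by
  induction k generalizing m with
  | zero => simp
  | succ n ih =>
    rw [pow_succ, Module.End.mul_apply, S'_single, ih]
    congr 1
    push_cast
    ring

lemma eq_zero_of_eval_even (q : ℂ[X]) (h : ∀ n : ℕ, q.eval ((2 * n : ℤ) : ℂ) = 0) :
    q = 0 := by
  apply Polynomial.eq_zero_of_infinite_isRoot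
  refine Set.infinite_of_injective_forall_mem
    (f := fun n : ℕ => ((2 * n : ℤ) : ℂ)) ?_ ?_
  · intro a b hab
    have hab' : ((2 * a : ℤ) : ℂ) = ((2 * b : ℤ) : ℂ) := hab
    have : (2 * a : ℤ) = 2 * b := by exact_mod_cast hab'
    omega
  · intro n
    exact h n

/-- For odd `k`, if `S^k ∘ q(D)` (resp. `S'^k ∘ q(D)`) commutes with the even Szegő
projector `Π_even`, then `q = 0`. -/
theorem statement5 (k : ℕ) (hk : Odd k) (q : ℂ[X]) :
    (Commute (S ^ k * Polynomial.aeval D q) SzegoEven → q = 0) ∧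
    (Commute (S' ^ k * Polynomial.aeval D q) SzegoEven → q = 0) := by
  constructor
  · intro hc
    apply eq_zero_of_eval_even
    intro n
    have h := DFunLike.congr_fun hc (Finsupp.single (2 * n : ℤ) 1)
    have hme : (0 : ℤ) ≤ 2 * n ∧ Even (2 * (n : ℤ)) := ⟨by positivity, ⟨n, by ring⟩⟩
    have hmo : ¬ ((0 : ℤ) ≤ 2 * n + k ∧ Even (2 * (n : ℤ) + k)) := by
      rintro ⟨-, he⟩
      obtain ⟨j, hj⟩ := hk
      obtain ⟨r, hr⟩ := he
      omega
    simp only [Module.End.mul_apply, Szego_single, if_pos hme, if_neg hmo,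
      aeval_D_single, map_smul, S_pow_single, smul_zero] at h
    exact (smul_eq_zero.mp h).resolve_right (single_ne _)
  · intro hc
    apply eq_zero_of_eval_even
    intro n
    have h := DFunLike.congr_fun hc (Finsupp.single (2 * n : ℤ) 1)
    have hme : (0 : ℤ) ≤ 2 * n ∧ Even (2 * (n : ℤ)) := ⟨by positivity, ⟨n, by ring⟩⟩
    have hmo : ¬ ((0 : ℤ) ≤ 2 * n - k ∧ Even (2 * (n : ℤ) - k)) := by
      rintro ⟨-, he⟩
      obtain ⟨j, hj⟩ := hk
      obtain ⟨r, hr⟩ := he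
      omega
    simp only [Module.End.mul_apply, Szego_single, if_pos hme, if_neg hmo,
      aeval_D_single, map_smul, S'_pow_single, smul_zero] at h
    exact (smul_eq_zero.mp h).resolve_right (single_ne _)
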